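/- Suppose c > c_⋆, where c_⋆ = -1 - x_⋆ - e^{x_⋆} and x_⋆ is the unique positive solution of x e^x/(1+e^x) = 1. Then there exist constants C > 0 and D ≥ 0 (depending only on c) such that for every x ∈ [0,1] and every ε ∈ (0,1), the dynamical-system mixing time satisfies τ̂(ε, x, c) ≤ C log(1/ε) + D. -/

import Mathlib

open Real MeasureTheory

noncomputable def sigmoid (x : ℝ) : ℝ := Real.exp x / (1 + Real.exp x)

noncomputable def mc (c x : ℝ) : ℝ := _root_.sigmoid (c * x)

noncomputable def sig' (x : ℝ) : ℝ := Real.exp x / (1 + Real.exp x) ^ 2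

lemma one_add_exp_pos (x : ℝ) : 0 < 1 + Real.exp x := by positivity

lemma sig'_pos (x : ℝ) : 0 < sig' x := by
  unfold sig'; positivity

lemma sigmoid_pos (x : ℝ) : 0 < _root_.sigmoid x := by unfold _root_.sigmoid; positivity

lemma sigmoid_lt_one (x : ℝ) : _root_.sigmoid x < 1 := by
  unfold _root_.sigmoid
  rw [div_lt_one (one_add_exp_pos x)]
  linarith

lemma sigmoid_hasDerivAt (x : ℝ) : HasDerivAt _root_.sigmoid (sig' x) x := by
  have h : HasDerivAt (fun y : ℝ => Real.exp y / (1 + Real.exp y))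
      ((Real.exp x * (1 + Real.exp x) - Real.exp x * Real.exp x) / (1 + Real.exp x) ^ 2) x := by
    have hd : HasDerivAt (fun y : ℝ => 1 + Real.exp y) (Real.exp x) x := by
      exact (Real.hasDerivAt_exp x).const_add 1
    exact (Real.hasDerivAt_exp x).div hd (ne_of_gt (one_add_exp_pos x))
  have : (Real.exp x * (1 + Real.exp x) - Real.exp x * Real.exp x) / (1 + Real.exp x) ^ 2
      = sig' x := by unfold sig'; ring
  rw [this] at h
  exact h

lemma continuous_sigmoid' : Continuous _root_.sigmoid :=
  Real.continuous_exp.div (continuous_const.add Real.continuous_exp)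
    (fun x => ne_of_gt (one_add_exp_pos x))

lemma continuous_sig' : Continuous sig' :=
  Real.continuous_exp.div ((continuous_const.add Real.continuous_exp).pow 2)
    (fun x => by positivity)

lemma mc_hasDerivAt (c x : ℝ) : HasDerivAt (mc c) (c * sig' (c * x)) x := by
  have h := (sigmoid_hasDerivAt (c * x)).comp x ((hasDerivAt_id x).const_mul c)
  rw [show mc c = _root_.sigmoid ∘ HMul.hMul c from rfl]
  simpa [mul_comm] using h

lemma sig'_neg (x : ℝ) : sig' (-x) = sig' x := by
  unfold sig'
  rw [Real.exp_neg]
  have h := Real.exp_pos x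
  field_simp
  ring

lemma sigmoid_neg (x : ℝ) : _root_.sigmoid (-x) = 1 / (1 + Real.exp x) := by
  unfold _root_.sigmoid
  rw [Real.exp_neg]
  have h := Real.exp_pos x
  field_simp
  ring

lemma key_Q (xs u : ℝ) (hid : xs * Real.exp xs = 1 + Real.exp xs) :
    u * ((1 + xs + Real.exp xs) - u) * Real.exp u ≤ (1 + Real.exp u) ^ 2 := by
  set A := Real.exp u with hA
  set E := Real.exp xs with hE
  have hA0 : 0 < A := Real.exp_pos u
  have hE0 : 0 < E := Real.exp_pos xs
  have h1 : E * (u - xs + 1) ≤ A := by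
    have := Real.add_one_le_exp (u - xs)
    have h2 : Real.exp (u - xs) = A / E := by rw [Real.exp_sub]
    rw [h2] at this
    calc E * (u - xs + 1) ≤ E * (A / E) := by
          exact mul_le_mul_of_nonneg_left this hE0.le
      _ = A := by field_simp
  have h2 : A * (xs - u + 1) ≤ E := by
    have := Real.add_one_le_exp (xs - u)
    have h3 : Real.exp (xs - u) = E / A := by rw [Real.exp_sub]
    rw [h3] at this
    calc A * (xs - u + 1) ≤ A * (E / A) := by
          exact mul_le_mul_of_nonneg_left this hA0.le
      _ = E := by field_simp
  nlinarith [mul_nonneg hA0.le (sub_nonneg.2 h1), sub_nonneg.2 h2,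
    mul_nonneg hA0.le (sq_nonneg (u - xs)), mul_pos hA0 hE0, sq_nonneg (u - xs)]

lemma key_strict (xs u t : ℝ) (hid : xs * Real.exp xs = 1 + Real.exp xs)
    (hu : 0 ≤ u) (hcon : u * (1 + Real.exp t) < 1 + xs + Real.exp xs) :
    u ^ 2 * Real.exp u * Real.exp t < (1 + Real.exp u) ^ 2 := by
  have hA0 : 0 < Real.exp u := Real.exp_pos u
  have ht0 : 0 < Real.exp t := Real.exp_pos t
  rcases eq_or_lt_of_le hu with h | h
  · rw [← h]
    have : (0:ℝ) < (1 + Real.exp (0:ℝ)) ^ 2 := by positivity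
    simpa using this
  · have h1 : u * Real.exp t < (1 + xs + Real.exp xs) - u := by nlinarith
    have h2 : u ^ 2 * Real.exp u * Real.exp t
        = (u * Real.exp u) * (u * Real.exp t) := by ring
    have h3 : (u * Real.exp u) * (u * Real.exp t)
        < (u * Real.exp u) * ((1 + xs + Real.exp xs) - u) :=
      mul_lt_mul_of_pos_left h1 (by positivity)
    have h4 := key_Q xs u hid
    nlinarith

lemma hpt_neg (xs c x : ℝ) (hid : xs * Real.exp xs = 1 + Real.exp xs)
    (hc : -(1 + xs + Real.exp xs) < c) (hc0 : c < 0) (hx : 0 ≤ x) :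
    c ^ 2 * sig' (c * mc c x) * sig' (c * x) < 1 := by
  set t : ℝ := -(c * x) with ht
  set u : ℝ := -(c * mc c x) with hu
  have ht0 : 0 ≤ t := by nlinarith
  have hsig := _root_.sigmoid_pos (c * x)
  have hu0 : 0 < u := by
    have : mc c x = _root_.sigmoid (c * x) := rfl
    nlinarith [_root_.sigmoid_pos (c * x)]
  have hmc : mc c x = 1 / (1 + Real.exp t) := by
    have : mc c x = _root_.sigmoid (-t) := by rw [ht]; simp [mc]
    rw [this, _root_.sigmoid_neg]
  have hueq : u * (1 + Real.exp t) = -c := by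
    rw [hu, hmc]
    field_simp
  have hcon : u * (1 + Real.exp t) < 1 + xs + Real.exp xs := by
    rw [hueq]; linarith
  have hkey := key_strict xs u t hid hu0.le hcon
  have e1 : sig' (c * mc c x) = sig' u := by rw [show c * mc c x = -u by rw [hu]; ring, sig'_neg]
  have e2 : sig' (c * x) = sig' t := by rw [show c * x = -t by rw [ht]; ring, sig'_neg]
  have hc2 : c ^ 2 = u ^ 2 * (1 + Real.exp t) ^ 2 := by nlinarith [hueq]
  rw [e1, e2, hc2]
  unfold sig'
  have p1 : (0:ℝ) < (1 + Real.exp u) ^ 2 := by positivity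
  have p2 : (0:ℝ) < (1 + Real.exp t) ^ 2 := by positivity
  have e3 : u ^ 2 * (1 + Real.exp t) ^ 2 * (Real.exp u / (1 + Real.exp u) ^ 2) *
      (Real.exp t / (1 + Real.exp t) ^ 2)
      = u ^ 2 * Real.exp u * Real.exp t / (1 + Real.exp u) ^ 2 := by
    field_simp
  rw [e3, div_lt_one p1]
  exact hkey

lemma factor_bound (c y : ℝ) (hc : 0 ≤ c) (hy : 1/2 ≤ y) :
    c * sig' (c * y) ≤ 2 / Real.exp 1 := by
  have hA : (0:ℝ) < Real.exp (c * y) := Real.exp_pos _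
  have h1 : sig' (c * y) ≤ (Real.exp (c * y))⁻¹ := by
    unfold sig'
    rw [div_le_iff₀ (by positivity)]
    rw [inv_mul_eq_div, le_div_iff₀ hA]
    nlinarith
  have h2 : (Real.exp (c * y))⁻¹ ≤ (Real.exp (c / 2))⁻¹ := by
    apply inv_anti₀ (Real.exp_pos _)
    apply Real.exp_le_exp.2
    nlinarith
  have hB : (0:ℝ) < Real.exp (c / 2) := Real.exp_pos _
  have he1 : (0:ℝ) < Real.exp 1 := Real.exp_pos _
  have h4 : c / 2 ≤ Real.exp (c / 2) / Real.exp 1 := by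
    have h5 := Real.add_one_le_exp (c / 2 - 1)
    rw [Real.exp_sub] at h5
    linarith
  have h6 : c * (Real.exp (c / 2))⁻¹ ≤ 2 / Real.exp 1 := by
    rw [mul_inv_le_iff₀ hB, mul_comm]
    rw [le_div_iff₀ he1] at h4
    have hr : Real.exp (c / 2) * (2 / Real.exp 1) = 2 * Real.exp (c / 2) / Real.exp 1 := by
      ring
    rw [hr, le_div_iff₀ he1]
    nlinarith
  calc c * sig' (c * y) ≤ c * (Real.exp (c * y))⁻¹ :=
        mul_le_mul_of_nonneg_left h1 hc
    _ ≤ c * (Real.exp (c / 2))⁻¹ := mul_le_mul_of_nonneg_left h2 hc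
    _ ≤ 2 / Real.exp 1 := h6

lemma half_le_sigmoid (z : ℝ) (hz : 0 ≤ z) : 1/2 ≤ _root_.sigmoid z := by
  have h1 : (1:ℝ) ≤ Real.exp z := Real.one_le_exp hz
  unfold _root_.sigmoid
  rw [le_div_iff₀ (one_add_exp_pos z)]
  linarith

lemma hpt_pos (c x : ℝ) (hc : 0 ≤ c) (hx : 1/2 ≤ x) :
    c ^ 2 * sig' (c * mc c x) * sig' (c * x) < 1 := by
  have hm : 1/2 ≤ mc c x := half_le_sigmoid (c * x) (by positivity)
  have f1 := factor_bound c (mc c x) hc hm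
  have f2 := factor_bound c x hc hx
  have p1 : 0 ≤ c * sig' (c * mc c x) := mul_nonneg hc (sig'_pos _).le
  have p2 : 0 ≤ c * sig' (c * x) := mul_nonneg hc (sig'_pos _).le
  have he : (2:ℝ) < Real.exp 1 := by
    have := Real.exp_one_gt_d9
    linarith
  have he1 : (0:ℝ) < Real.exp 1 := Real.exp_pos _
  have hlt : 2 / Real.exp 1 < 1 := by
    rw [div_lt_one he1]; linarith
  have : c ^ 2 * sig' (c * mc c x) * sig' (c * x)
      = (c * sig' (c * mc c x)) * (c * sig' (c * x)) := by ring
  rw [this]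
  nlinarith

lemma master (c xc a b : ℝ) (hab : a ≤ b) (hsub : Set.Icc a b ⊆ Set.Icc (0:ℝ) 1)
    (hmap : ∀ x ∈ Set.Icc (0:ℝ) 1, mc c x ∈ Set.Icc a b)
    (hpt : ∀ x ∈ Set.Icc a b, c ^ 2 * sig' (c * mc c x) * sig' (c * x) < 1)
    (hxc : xc ∈ Set.Icc (0:ℝ) 1 ∧ mc c xc = xc) :
    ∃ ρ : ℝ, 1/2 ≤ ρ ∧ ρ < 1 ∧ ∀ x ∈ Set.Icc (0:ℝ) 1, ∀ t : ℕ,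
      |(mc c)^[t] x - xc| ≤ 2 * ρ ^ t := by
  set h : ℝ → ℝ := fun x => c ^ 2 * sig' (c * mc c x) * sig' (c * x) with hh
  have hcont : Continuous h := by
    apply Continuous.mul
    apply Continuous.mul continuous_const
    · exact continuous_sig'.comp (continuous_const.mul
        (continuous_sigmoid'.comp (continuous_const.mul continuous_id)))
    · exact continuous_sig'.comp (continuous_const.mul continuous_id)
  obtain ⟨x0, hx0I, hmax⟩ := isCompact_Icc.exists_isMaxOn (Set.nonempty_Icc.2 hab)
    hcont.continuousOn
  set k : ℝ := max (h x0) (1/2) with hk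
  have hk1 : k < 1 := max_lt (hpt x0 hx0I) (by norm_num)
  have hkhalf : 1/2 ≤ k := le_max_right _ _
  have hk0 : 0 < k := lt_of_lt_of_le (by norm_num) hkhalf
  set g : ℝ → ℝ := fun y => mc c (mc c y) with hg
  have hg' : ∀ x : ℝ, HasDerivAt g ((c * sig' (c * mc c x)) * (c * sig' (c * x))) x :=
    fun x => (mc_hasDerivAt c (mc c x)).comp x (mc_hasDerivAt c x)
  have hbound : ∀ x ∈ Set.Icc a b,
      ‖(c * sig' (c * mc c x)) * (c * sig' (c * x))‖ ≤ k := by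
    intro x hx
    have he : (c * sig' (c * mc c x)) * (c * sig' (c * x)) = h x := by rw [hh]; ring
    rw [he, Real.norm_eq_abs]
    have hnn : (0:ℝ) ≤ h x := by
      show (0:ℝ) ≤ c ^ 2 * sig' (c * mc c x) * sig' (c * x)
      exact mul_nonneg (mul_nonneg (sq_nonneg c) (sig'_pos _).le) (sig'_pos _).le
    rw [abs_of_nonneg hnn]
    exact le_trans (hmax hx) (le_max_left _ _)
  have hlip : ∀ x ∈ Set.Icc a b, ∀ y ∈ Set.Icc a b, |g y - g x| ≤ k * |y - x| := by
    intro x hx y hy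
    have := (convex_Icc a b).norm_image_sub_le_of_norm_hasDerivWithin_le
      (f := g) (f' := fun x => (c * sig' (c * mc c x)) * (c * sig' (c * x)))
      (fun z hz => (hg' z).hasDerivWithinAt) hbound hx hy
    simpa [Real.norm_eq_abs] using this
  have hxcI : xc ∈ Set.Icc a b := by
    have := hmap xc hxc.1
    rwa [hxc.2] at this
  have hgxc : g xc = xc := by rw [hg]; simp only []; rw [hxc.2, hxc.2]
  have hInv : ∀ y ∈ Set.Icc a b, g y ∈ Set.Icc a b := by
    intro y hy
    exact hmap _ (hsub (hmap _ (hsub hy)))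
  have hdiam : ∀ y ∈ Set.Icc a b, |y - xc| ≤ 1 := by
    intro y hy
    have h1 := hsub hy
    have h2 := hxc.1
    simp only [Set.mem_Icc] at h1 h2
    rw [abs_le]
    constructor <;> linarith
  have iterBound : ∀ n : ℕ, ∀ y ∈ Set.Icc a b,
      g^[n] y ∈ Set.Icc a b ∧ |g^[n] y - xc| ≤ k ^ n := by
    intro n
    induction n with
    | zero => intro y hy; exact ⟨by simpa using hy, by simpa using hdiam y hy⟩
    | succ n ih =>
      intro y hy
      obtain ⟨hmem, hb⟩ := ih y hy
      constructor
      · rw [Function.iterate_succ_apply']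
        exact hInv _ hmem
      · rw [Function.iterate_succ_apply']
        calc |g (g^[n] y) - xc| = |g (g^[n] y) - g xc| := by rw [hgxc]
          _ ≤ k * |g^[n] y - xc| := hlip xc hxcI _ hmem
          _ ≤ k * k ^ n := mul_le_mul_of_nonneg_left hb hk0.le
          _ = k ^ (n + 1) := by ring
  refine ⟨Real.sqrt k, ?_, ?_, ?_⟩
  · nlinarith [Real.sq_sqrt hk0.le, Real.sqrt_nonneg k]
  · nlinarith [Real.sq_sqrt hk0.le, Real.sqrt_nonneg k]
  · intro x hx t
    have hρ0 : 0 ≤ Real.sqrt k := Real.sqrt_nonneg k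
    have hρ2 : Real.sqrt k ^ 2 = k := Real.sq_sqrt hk0.le
    have hρhalf : 1/2 ≤ Real.sqrt k := by nlinarith
    have hkpow : ∀ n : ℕ, k ^ n = Real.sqrt k ^ (2 * n) := by
      intro n; rw [pow_mul, hρ2]
    match t with
    | 0 =>
      simp only [Function.iterate_zero_apply, pow_zero, mul_one]
      have h2 := hxc.1
      simp only [Set.mem_Icc] at hx h2
      rw [abs_le]; constructor <;> linarith
    | Nat.succ s =>
      obtain ⟨n, hn | hn⟩ := Nat.even_or_odd' s
      · -- t = 2n + 1
        have ht : s.succ = 2 * n + 1 := by omega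
        rw [ht]
        have heq : (mc c)^[2 * n + 1] x = g^[n] (mc c x) := by
          rw [Function.iterate_add_apply, Function.iterate_mul]
          rfl
        rw [heq]
        have hb := (iterBound n (mc c x) (hmap x hx)).2
        have hpn : (0:ℝ) ≤ Real.sqrt k ^ (2 * n) := pow_nonneg hρ0 _
        calc |g^[n] (mc c x) - xc| ≤ k ^ n := hb
          _ = Real.sqrt k ^ (2 * n) := hkpow n
          _ ≤ 2 * Real.sqrt k ^ (2 * n + 1) := by
              rw [pow_succ]
              nlinarith
      · -- t = 2n + 2
        have ht : s.succ = 2 * n + 2 := by omega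
        rw [ht]
        have heq : (mc c)^[2 * n + 2] x = g^[n] (mc c (mc c x)) := by
          rw [Function.iterate_add_apply, Function.iterate_mul]
          rfl
        rw [heq]
        have hmem2 : mc c (mc c x) ∈ Set.Icc a b := hmap _ (hsub (hmap x hx))
        have hb := (iterBound n (mc c (mc c x)) hmem2).2
        have hpn : (0:ℝ) ≤ Real.sqrt k ^ (2 * n) := pow_nonneg hρ0 _
        calc |g^[n] (mc c (mc c x)) - xc| ≤ k ^ n := hb
          _ = Real.sqrt k ^ (2 * n) := hkpow n
          _ ≤ 2 * Real.sqrt k ^ (2 * n + 2) := by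
              rw [pow_succ, pow_succ]
              nlinarith

lemma geo (c xc : ℝ) (ρ : ℝ) (hρh : 1/2 ≤ ρ) (hρ1 : ρ < 1)
    (hb : ∀ x ∈ Set.Icc (0:ℝ) 1, ∀ t : ℕ, |(mc c)^[t] x - xc| ≤ 2 * ρ ^ t) :
    ∃ C > (0:ℝ), ∃ D : ℝ, 0 ≤ D ∧
      ∀ x ∈ Set.Icc (0:ℝ) 1, ∀ ε : ℝ, 0 < ε → ε < 1 →
        ∃ t : ℕ, (t : ℝ) ≤ C * Real.log (1/ε) + D ∧
          ∀ t' : ℕ, t ≤ t' → |(mc c)^[t'] x - xc| < ε := by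
  have hρ0 : (0:ℝ) < ρ := lt_of_lt_of_le (by norm_num) hρh
  have hL : 0 < Real.log (1/ρ) := Real.log_pos (one_lt_one_div hρ0 hρ1)
  set L := Real.log (1/ρ) with hLdef
  have hlog2 : (0:ℝ) ≤ Real.log 2 := Real.log_nonneg (by norm_num)
  refine ⟨1/L, by positivity, Real.log 2 / L + 2, by positivity, ?_⟩
  intro x hx ε hε0 hε1
  have h2ε : (1:ℝ) < 2/ε := by
    rw [lt_div_iff₀ hε0]; linarith
  have hlog2ε : 0 ≤ Real.log (2/ε) := Real.log_nonneg h2ε.le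
  set t : ℕ := ⌊Real.log (2/ε) / L⌋₊ + 1 with htdef
  have hsplit : Real.log (2/ε) = Real.log 2 + Real.log (1/ε) := by
    rw [show (2:ℝ)/ε = 2 * (1/ε) by ring]
    rw [Real.log_mul (by norm_num) (by positivity)]
  refine ⟨t, ?_, ?_⟩
  · have h1 : (⌊Real.log (2/ε) / L⌋₊ : ℝ) ≤ Real.log (2/ε) / L :=
      Nat.floor_le (by positivity)
    have h2 : (t:ℝ) ≤ Real.log (2/ε) / L + 1 := by
      rw [htdef]; push_cast; linarith
    have h3 : Real.log (2/ε) / L = Real.log 2 / L + (1/L) * Real.log (1/ε) := by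
      rw [hsplit]; ring
    rw [h3] at h2
    linarith
  · intro t' htt'
    have hkey : 2 * ρ ^ t < ε := by
      have hfl : Real.log (2/ε) / L < (t:ℝ) := by
        rw [htdef]; push_cast
        exact Nat.lt_floor_add_one _
      have h5 : Real.log (2/ε) < (t:ℝ) * L := by
        rw [div_lt_iff₀ hL] at hfl; linarith
      have hlogρ : Real.log (1/ρ) = -Real.log ρ := by
        rw [one_div, Real.log_inv]
      have h6 : (t:ℝ) * Real.log ρ < Real.log (ε/2) := by
        have h7 : Real.log (ε/2) = -Real.log (2/ε) := by
          rw [show (ε:ℝ)/2 = (2/ε)⁻¹ by field_simp, Real.log_inv]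
        rw [h7]
        have : (t:ℝ) * L = -((t:ℝ) * Real.log ρ) := by rw [hLdef, hlogρ]; ring
        nlinarith
      have h8 : ρ ^ t = Real.exp ((t:ℝ) * Real.log ρ) := by
        rw [Real.exp_nat_mul, Real.exp_log hρ0]
      have h9 : ρ ^ t < ε/2 := by
        rw [h8, show ε/2 = Real.exp (Real.log (ε/2)) by rw [Real.exp_log (by positivity)]]
        exact Real.exp_lt_exp.2 h6
      linarith
    have hmono : ρ ^ t' ≤ ρ ^ t := pow_le_pow_of_le_one hρ0.le hρ1.le htt'
    have := hb x hx t'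
    linarith

/-- If c > c⋆, the dynamical-system mixing time satisfies τ̂(ε,x,c) ≤ C log(1/ε) + D. -/
theorem dyn_fast_convergence (xs c xc : ℝ)
    (hxs : 0 < xs ∧ xs * Real.exp xs / (1 + Real.exp xs) = 1)
    (hc : c > -1 - xs - Real.exp xs)
    (hxc : xc ∈ Set.Icc (0:ℝ) 1 ∧ mc c xc = xc) :
    ∃ C > (0:ℝ), ∃ D : ℝ, 0 ≤ D ∧
      ∀ x ∈ Set.Icc (0:ℝ) 1, ∀ ε : ℝ, 0 < ε → ε < 1 →
        ∃ t : ℕ, (t : ℝ) ≤ C * Real.log (1/ε) + D ∧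
          ∀ t' : ℕ, t ≤ t' → |(mc c)^[t'] x - xc| < ε := by
  have hid : xs * Real.exp xs = 1 + Real.exp xs := by
    have h := hxs.2
    field_simp at h
    linarith
  rcases lt_or_ge c 0 with hc0 | hc0
  · -- c < 0 : work on [0, 1/2]
    have hmaster := master c xc 0 (1/2) (by norm_num)
      (by intro y hy; simp only [Set.mem_Icc] at *; constructor <;> linarith [hy.1, hy.2])
      (by
        intro x hx
        simp only [Set.mem_Icc] at hx ⊢
        constructor
        · exact (_root_.sigmoid_pos (c * x)).le
        · have hz : c * x ≤ 0 := mul_nonpos_of_nonpos_of_nonneg hc0.le hx.1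
          have he : Real.exp (c * x) ≤ 1 := Real.exp_le_one_iff.2 hz
          show _root_.sigmoid (c * x) ≤ 1/2
          unfold _root_.sigmoid
          rw [div_le_iff₀ (one_add_exp_pos _)]
          linarith)
      (by
        intro x hx
        simp only [Set.mem_Icc] at hx
        exact hpt_neg xs c x hid (by linarith) hc0 hx.1)
      hxc
    obtain ⟨ρ, h1, h2, h3⟩ := hmaster
    exact geo c xc ρ h1 h2 h3
  · -- 0 ≤ c : work on [1/2, 1]
    have hmaster := master c xc (1/2) 1 (by norm_num)
      (by intro y hy; simp only [Set.mem_Icc] at *; constructor <;> linarith [hy.1, hy.2])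
      (by
        intro x hx
        simp only [Set.mem_Icc] at hx ⊢
        constructor
        · exact half_le_sigmoid (c * x) (mul_nonneg hc0 hx.1)
        · exact (_root_.sigmoid_lt_one (c * x)).le)
      (by
        intro x hx
        simp only [Set.mem_Icc] at hx
        exact hpt_pos c x hc0 hx.1)
      hxc
    obtain ⟨ρ, h1, h2, h3⟩ := hmaster
    exact geo c xc ρ h1 h2 h3
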